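/- Let λ > 0 and 1 ≤ k < l ≤ n with N(k,l) ≤ λ, and let x ∈ K'. Then the vertex x' exists (i.e., there is some v with x < v ≤ l and δ_P(x,v) > λ), and x' ∈ L'. -/

import Mathlib

/-!
Since `δ_P(k,x) ≤ λ < δ_P(x,l)`, the vertex `l` is a candidate, so `x'` exists, and
`δ_P(k,x') ≥ δ_P(x,x') > λ` keeps `x'` out of `K`. A shortest route from `x'` to `p_n` in
`P̄[k,l]` either runs along the path through `p_l` or first walks back from `x'` to `p_k`, so
`p̄(x',n) ≥ min(δ_P(x',l), δ_P(k,x'))`; as `p̄(x',n) ≤ E(k,l) ≤ λ < δ_P(k,x')`, this forces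
`δ_P(x',l) ≤ λ`.
-/

noncomputable section

variable {X : Type*} [MetricSpace X]

/-- Path distance between vertices `i` and `j` of the path `p₁, …, pₙ`:
the sum of the edge weights `d(p_t, p_{t+1})` for `min i j ≤ t < max i j`. -/
def pathDist (p : ℕ → X) (i j : ℕ) : ℝ :=
  ∑ t ∈ Finset.Ico (min i j) (max i j), dist (p t) (p (t + 1))

/-- Shortest-path distance between vertices `x` and `y` in the unicyclic graph
`P̄[k,l]` obtained by adding the shortcut `(p_k, p_l)` of weight `d(p_k, p_l)`. -/
def pbar (p : ℕ → X) (k l x y : ℕ) : ℝ :=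
  min (pathDist p x y)
    (min (pathDist p x k + dist (p k) (p l) + pathDist p l y)
         (pathDist p x l + dist (p k) (p l) + pathDist p k y))

/-- The length `|C[k,l]|` of the cycle `C[k,l]`. -/
def cycleLen (p : ℕ → X) (k l : ℕ) : ℝ :=
  pathDist p k l + dist (p k) (p l)

/-- The cycle distance `c_{k,l}(x,y)` for `k ≤ x, y ≤ l`. -/
def cycDist (p : ℕ → X) (k l x y : ℕ) : ℝ :=
  min (pathDist p x y) (cycleLen p k l - pathDist p x y)

/-- `S(k,l) = max_{k ≤ x ≤ l} p̄_{k,l}(1,x)`. -/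
def Sfun (p : ℕ → X) (k l : ℕ) : ℝ :=
  sSup ((fun x => pbar p k l 1 x) '' Set.Icc k l)

/-- `E(k,l) = max_{k ≤ x ≤ l} p̄_{k,l}(x,n)`. -/
def Efun (p : ℕ → X) (n k l : ℕ) : ℝ :=
  sSup ((fun x => pbar p k l x n) '' Set.Icc k l)

/-- `U(k,l) = p̄_{k,l}(1,n)`. -/
def Ufun (p : ℕ → X) (n k l : ℕ) : ℝ :=
  pbar p k l 1 n

/-- `O(k,l) = max_{k ≤ x < y ≤ l} c_{k,l}(x,y)`. -/
def Ofun (p : ℕ → X) (k l : ℕ) : ℝ :=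
  sSup {r | ∃ x y : ℕ, k ≤ x ∧ x < y ∧ y ≤ l ∧ r = cycDist p k l x y}

/-- `N(k,l) = max (S(k,l), E(k,l), U(k,l))`. -/
def Nfun (p : ℕ → X) (n k l : ℕ) : ℝ :=
  max (Sfun p k l) (max (Efun p n k l) (Ufun p n k l))

/-- `M(k,l) = max_{1 ≤ x < y ≤ n} p̄_{k,l}(x,y)`, the diameter of `P̄[k,l]`. -/
def Mfun (p : ℕ → X) (n k l : ℕ) : ℝ :=
  sSup {r | ∃ x y : ℕ, 1 ≤ x ∧ x < y ∧ y ≤ n ∧ r = pbar p k l x y}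

section PathDist

variable (p : ℕ → X)

lemma pathDist_nonneg (i j : ℕ) : 0 ≤ pathDist p i j :=
  Finset.sum_nonneg fun _ _ => dist_nonneg

lemma pathDist_comm (i j : ℕ) : pathDist p i j = pathDist p j i := by
  rw [pathDist, pathDist, min_comm, max_comm]

lemma pathDist_self (i : ℕ) : pathDist p i i = 0 := by
  simp [pathDist]

lemma pathDist_add {i j m : ℕ} (hij : i ≤ j) (hjm : j ≤ m) :
    pathDist p i m = pathDist p i j + pathDist p j m := by
  simp only [pathDist, min_eq_left hij, max_eq_right hij, min_eq_left hjm, max_eq_right hjm,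
    min_eq_left (hij.trans hjm), max_eq_right (hij.trans hjm)]
  exact (Finset.sum_Ico_consecutive _ hij hjm).symm

lemma pathDist_le_pathDist_right {i j m : ℕ} (hij : i ≤ j) (hjm : j ≤ m) :
    pathDist p i j ≤ pathDist p i m := by
  rw [pathDist_add p hij hjm]
  linarith [pathDist_nonneg p j m]

lemma pathDist_le_pathDist_left {i j m : ℕ} (hij : i ≤ j) (hjm : j ≤ m) :
    pathDist p j m ≤ pathDist p i m := by
  rw [pathDist_add p hij hjm]
  linarith [pathDist_nonneg p i j]

end PathDist

lemma min_pathDist_le_pbar (p : ℕ → X) {k l y n : ℕ} (hy : y ≤ l) (hl : l ≤ n) :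
    min (pathDist p y l) (pathDist p k y) ≤ pbar p k l y n := by
  have hd := dist_nonneg (x := p k) (y := p l)
  refine le_min ?_ (le_min ?_ ?_)
  · exact min_le_of_left_le (pathDist_le_pathDist_right p hy hl)
  · refine min_le_of_right_le ?_
    rw [pathDist_comm p y k]
    linarith [pathDist_nonneg p l n]
  · refine min_le_of_left_le ?_
    linarith [pathDist_nonneg p k n]

lemma pbar_le_Efun (p : ℕ → X) {n k l y : ℕ} (hky : k ≤ y) (hyl : y ≤ l) :
    pbar p k l y n ≤ Efun p n k l :=
  le_csSup ((Set.finite_Icc k l).image _).bddAbove ⟨y, ⟨hky, hyl⟩, rfl⟩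

lemma Efun_le_Nfun (p : ℕ → X) (n k l : ℕ) : Efun p n k l ≤ Nfun p n k l :=
  (le_max_left _ _).trans (le_max_right _ _)

theorem xprime_exists_and_in_L'_general {X : Type*} [MetricSpace X]
    (n : ℕ) (p : ℕ → X)
    (k l : ℕ) (hl : l ≤ n)
    (lam : ℝ) (hlam : 0 < lam) (hN : Nfun p n k l ≤ lam)
    (x : ℕ)
    (hx : x ∈ {z : ℕ | k ≤ z ∧ z ≤ l ∧ pathDist p k z ≤ lam} \
              {z : ℕ | k ≤ z ∧ z ≤ l ∧ pathDist p z l ≤ lam}) :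
    {v : ℕ | x < v ∧ v ≤ l ∧ lam < pathDist p x v}.Nonempty ∧
    sInf {v : ℕ | x < v ∧ v ≤ l ∧ lam < pathDist p x v} ∈
      {z : ℕ | k ≤ z ∧ z ≤ l ∧ pathDist p z l ≤ lam} \
      {z : ℕ | k ≤ z ∧ z ≤ l ∧ pathDist p k z ≤ lam} := by
  obtain ⟨⟨hkx, hxl, -⟩, hxL⟩ := hx
  have hlam_lt : lam < pathDist p x l := by
    simp only [Set.mem_ofPred_eq, not_and, not_le] at hxL
    exact hxL hkx hxl
  have hxl' : x < l := by
    refine hxl.lt_of_ne fun hxl_eq => ?_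
    rw [hxl_eq, pathDist_self] at hlam_lt
    linarith
  have hne : {v : ℕ | x < v ∧ v ≤ l ∧ lam < pathDist p x v}.Nonempty :=
    ⟨l, hxl', le_rfl, hlam_lt⟩
  refine ⟨hne, ?_⟩
  obtain ⟨hxx', hx'l, hlam_lt'⟩ := Nat.sInf_mem hne
  set x' := sInf {v : ℕ | x < v ∧ v ≤ l ∧ lam < pathDist p x v}
  have hkx' : k ≤ x' := hkx.trans hxx'.le
  have hK : lam < pathDist p k x' := hlam_lt'.trans_le (pathDist_le_pathDist_left p hkx hxx'.le)
  have hpbar : pbar p k l x' n ≤ lam :=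
    ((pbar_le_Efun p hkx' hx'l).trans (Efun_le_Nfun p n k l)).trans hN
  have hL : pathDist p x' l ≤ lam := by
    by_contra! hL
    linarith [min_pathDist_le_pbar p (k := k) hx'l hl, lt_min hL hK]
  exact ⟨⟨hkx', hx'l, hL⟩, fun ⟨_, _, hK'⟩ => hK'.not_gt hK⟩

/-- Let `λ > 0` and `1 ≤ k < l ≤ n` with `N(k,l) ≤ λ`, and let
`x ∈ K' = K \ L`. Then the vertex `x'` exists (i.e., there is some `v` with
`x < v ≤ l` and `δ_P(x,v) > λ`), and `x'` (the smallest such index) lies in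
`L' = L \ K`. -/
theorem xprime_exists_and_in_L' {X : Type*} [MetricSpace X]
    (n : ℕ) (hn : 2 ≤ n) (p : ℕ → X)
    (k l : ℕ) (hk : 1 ≤ k) (hkl : k < l) (hl : l ≤ n)
    (lam : ℝ) (hlam : 0 < lam) (hN : Nfun p n k l ≤ lam)
    (x : ℕ)
    (hx : x ∈ {z : ℕ | k ≤ z ∧ z ≤ l ∧ pathDist p k z ≤ lam} \
              {z : ℕ | k ≤ z ∧ z ≤ l ∧ pathDist p z l ≤ lam}) :
    {v : ℕ | x < v ∧ v ≤ l ∧ lam < pathDist p x v}.Nonempty ∧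
    sInf {v : ℕ | x < v ∧ v ≤ l ∧ lam < pathDist p x v} ∈
      {z : ℕ | k ≤ z ∧ z ≤ l ∧ pathDist p z l ≤ lam} \
      {z : ℕ | k ≤ z ∧ z ≤ l ∧ pathDist p k z ≤ lam} :=
  xprime_exists_and_in_L'_general n p k l hl lam hlam hN x hx
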